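/- Let G be a tree on state nodes with m input nodes, and suppose G decomposes into m vertex-disjoint path components G₁,...,G_m, each with exactly one input node attached at a terminal node of its path, such that consecutive components are joined by exactly one bridge edge. Then G is strongly sign controllable: for every α ⊆ V_S \ N(V_I), the set N(α)\α contains a dedicated node. -/

import Mathlib

/-!
Take the highest path that meets `α`; the bridge node above it is then outside `α`. On that
path `α` avoids the endpoint carrying the input, so the path neighbor of an extreme element of
`α` on that side is dedicated within the path. In the whole tree the only further neighbor it can
have in `α` lies across the bridge to the path below, and then the same situation recurs one path
lower, with the bridge node above outside `α`. The descent must stop, producing a dedicated node.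
-/

open scoped Classical

/-- Dedicated node of `α` in `G`: not in `α`, exactly one neighbor in `α`. -/
def ded {V : Type} (G : SimpleGraph V) (α : Finset V) (v : V) : Prop :=
  v ∉ α ∧ (α.filter (G.Adj v)).card = 1

/-- A tree built from `m` path components: component `i < m` has state nodes
`(i, a)` for `a < n i`, carrying path edges; component `i` has one input node
(`Sum.inr i`) attached at the node `(i, t i)`; consecutive components `i` and
`i+1` are joined by exactly one bridge edge `(i, p i) — (i+1, q i)`. -/
def chainPaths (m : ℕ) (n t p q : ℕ → ℕ) : SimpleGraph ((ℕ × ℕ) ⊕ ℕ) :=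
  SimpleGraph.fromRel (fun x y =>
    match x, y with
    | Sum.inl (i, a), Sum.inl (j, b) =>
        (i = j ∧ i < m ∧ a + 1 = b ∧ b < n i) ∨
        (j = i + 1 ∧ j < m ∧ a = p i ∧ b = q i)
    | Sum.inr u, Sum.inl (j, a) => u = j ∧ j < m ∧ a = t j
    | _, _ => False)

lemma ded_iff {V : Type} {G : SimpleGraph V} {α : Finset V} {v : V} :
    ded G α v ↔ v ∉ α ∧ ∃ w ∈ α, G.Adj v w ∧ ∀ x ∈ α, G.Adj v x → x = w := by
  simp only [ded, Finset.card_eq_one, Finset.eq_singleton_iff_unique_mem, Finset.mem_filter,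
    and_imp, and_assoc]

lemma hasse_nat_adj {a b : ℕ} : (SimpleGraph.hasse ℕ).Adj a b ↔ a + 1 = b ∨ b + 1 = a := by
  simp only [SimpleGraph.hasse_adj, Nat.covBy_iff_add_one_eq]

-- The witness is `min A - 1`, or `max A + 1` when `0 ∈ A` (and hence `t = N - 1`).
lemma exists_ded_hasse_nat_of_endpoint_not_mem {A : Finset ℕ} {N t : ℕ} (hA : A.Nonempty)
    (hAN : ∀ a ∈ A, a < N) (ht : t = 0 ∨ t = N - 1) (htA : t ∉ A) :
    ∃ c < N, ded (SimpleGraph.hasse ℕ) A c := by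
  simp only [ded_iff, hasse_nat_adj]
  by_cases h0 : 0 ∈ A
  · have hb := A.max'_mem hA
    have hbN := hAN _ hb
    have hlt : ∀ x ∈ A, x < A.max' hA + 1 := fun x hx => Nat.lt_succ_of_le (A.le_max' x hx)
    refine ⟨A.max' hA + 1, by grind, fun h => (hlt _ h).false, _, hb, .inr rfl, ?_⟩
    rintro x hx (rfl | hx')
    · exact absurd (hlt _ hx) (by omega)
    · omega
  · have hb := A.min'_mem hA
    have hgt : ∀ x ∈ A, A.min' hA ≤ x := fun x hx => A.min'_le x hx
    have hb0 : A.min' hA ≠ 0 := fun h => h0 (h ▸ hb)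
    refine ⟨A.min' hA - 1, by grind, fun h => by grind, _, hb, .inl (by omega), ?_⟩
    rintro x hx (hx' | hx')
    · omega
    · grind

lemma chainPaths_adj_inl_inl {m : ℕ} {n t p q : ℕ → ℕ} {i a j b : ℕ} :
    (chainPaths m n t p q).Adj (.inl (i, a)) (.inl (j, b)) ↔
      (i = j ∧ i < m ∧ (a + 1 = b ∧ b < n i ∨ b + 1 = a ∧ a < n i)) ∨
      (j = i + 1 ∧ j < m ∧ a = p i ∧ b = q i) ∨ (i = j + 1 ∧ i < m ∧ b = p j ∧ a = q j) := by
  simp only [chainPaths, SimpleGraph.fromRel_adj, ne_eq, Sum.inl.injEq, Prod.mk.injEq]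
  constructor
  · rintro ⟨-, ((⟨rfl, h⟩ | h) | (⟨rfl, h⟩ | h))⟩ <;> omega
  · rintro (⟨rfl, h⟩ | ⟨rfl, h⟩ | ⟨rfl, h⟩) <;> omega

noncomputable def pathSlice (α : Finset ((ℕ × ℕ) ⊕ ℕ)) (i : ℕ) : Finset ℕ :=
  α.preimage (fun a => .inl (i, a)) fun _ _ _ _ h => by simpa using h

@[simp]
lemma mem_pathSlice {α : Finset ((ℕ × ℕ) ⊕ ℕ)} {i a : ℕ} :
    a ∈ pathSlice α i ↔ .inl (i, a) ∈ α :=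
  Finset.mem_preimage

section chainPaths

variable {m : ℕ} {n t p q : ℕ → ℕ} {α : Finset ((ℕ × ℕ) ⊕ ℕ)}

lemma ded_chainPaths_or_bridge_mem (hα : ∀ w ∈ α, ∃ j b, w = .inl (j, b) ∧ b < n j) {i c : ℕ}
    (hi : i < m) (hc : c < n i) (hded : ded (SimpleGraph.hasse ℕ) (pathSlice α i) c)
    (hnext : .inl (i + 1, q i) ∉ α) :
    ded (chainPaths m n t p q) α (.inl (i, c)) ∨ ∃ k, i = k + 1 ∧ c = q k ∧ .inl (k, p k) ∈ α := by
  by_cases hprev : ∃ k, i = k + 1 ∧ c = q k ∧ .inl (k, p k) ∈ α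
  · exact .inr hprev
  simp only [not_exists, not_and] at hprev
  obtain ⟨hcα, b, hbα, hcb, hb_unique⟩ := ded_iff.1 hded
  rw [mem_pathSlice] at hcα hbα
  obtain ⟨_, _, hb, hbn⟩ := hα _ hbα
  simp only [Sum.inl.injEq, Prod.mk.injEq] at hb
  obtain ⟨rfl, rfl⟩ := hb
  refine .inl (ded_iff.2 ⟨hcα, _, hbα, ?_, ?_⟩)
  · rw [hasse_nat_adj] at hcb
    rw [chainPaths_adj_inl_inl]
    omega
  · intro x hx hadj
    obtain ⟨j, d, rfl, -⟩ := hα x hx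
    rcases chainPaths_adj_inl_inl.1 hadj with ⟨rfl, -, hcd⟩ | ⟨rfl, -, -, rfl⟩ | ⟨rfl, -, rfl, rfl⟩
    · rw [hb_unique d (mem_pathSlice.2 hx) (hasse_nat_adj.2 (by omega))]
    · exact absurd hx hnext
    · exact absurd hx (hprev j rfl rfl)

lemma exists_ded_chainPaths_of_pathSlice_nonempty
    (hα : ∀ w ∈ α, ∃ i a, w = .inl (i, a) ∧ i < m ∧ a < n i ∧ a ≠ t i)
    (ht : ∀ i < m, t i = 0 ∨ t i = n i - 1) (i : ℕ) (hi : (pathSlice α i).Nonempty)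
    (hnext : .inl (i + 1, q i) ∉ α) : ∃ v, ded (chainPaths m n t p q) α v := by
  induction i using Nat.strong_induction_on with
  | _ i ih =>
  have hslice : ∀ a ∈ pathSlice α i, i < m ∧ a < n i ∧ a ≠ t i := by
    intro a ha
    obtain ⟨_, _, h, hmem⟩ := hα _ (mem_pathSlice.1 ha)
    simp only [Sum.inl.injEq, Prod.mk.injEq] at h
    obtain ⟨rfl, rfl⟩ := h
    exact hmem
  obtain ⟨a, ha⟩ := hi
  have him := (hslice a ha).1
  obtain ⟨c, hc, hded⟩ := exists_ded_hasse_nat_of_endpoint_not_mem ⟨a, ha⟩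
    (fun b hb => (hslice b hb).2.1) (ht i him) fun h => (hslice _ h).2.2 rfl
  have hα' : ∀ w ∈ α, ∃ j b, w = .inl (j, b) ∧ b < n j := fun w hw => by
    obtain ⟨j, b, rfl, -, hb, -⟩ := hα w hw
    exact ⟨j, b, rfl, hb⟩
  rcases ded_chainPaths_or_bridge_mem (t := t) (p := p) hα' him hc hded hnext with
    hv | ⟨k, rfl, rfl, hk⟩
  · exact ⟨_, hv⟩
  · exact ih k (Nat.lt_succ_self k) ⟨p k, mem_pathSlice.2 hk⟩ (mem_pathSlice.not.1 hded.1)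

end chainPaths

theorem stmt6_general (m : ℕ) (n t p q : ℕ → ℕ)
    -- each input node is attached at a terminal node of its path
    (ht : ∀ i < m, t i = 0 ∨ t i = n i - 1) :
    -- G is strongly sign controllable: every nonempty α ⊆ V_S \ N(V_I)
    -- admits a dedicated node
    ∀ α ⊆ ((((Finset.range m).biUnion
            (fun i => (Finset.range (n i)).image (fun a => (i, a)))).image
              Sum.inl : Finset ((ℕ × ℕ) ⊕ ℕ)) \
          ((Finset.range m).image (fun i => Sum.inl (i, t i)))),
      α.Nonempty → ∃ v, ded (chainPaths m n t p q) α v := by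
  intro α hsub hne
  have hα : ∀ w ∈ α, ∃ i a, w = .inl (i, a) ∧ i < m ∧ a < n i ∧ a ≠ t i := by
    intro w hw
    have hw' := hsub hw
    simp only [Finset.mem_sdiff, Finset.mem_image, Finset.mem_biUnion, Finset.mem_range,
      not_exists, not_and] at hw'
    obtain ⟨⟨_, ⟨i, hi, a, ha, rfl⟩, rfl⟩, hinput⟩ := hw'
    exact ⟨i, a, rfl, hi, ha, fun h => hinput i hi (h ▸ rfl)⟩
  obtain ⟨w, hw, hmax⟩ := α.exists_max_image (Sum.elim Prod.fst 0) hne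
  obtain ⟨i, a, rfl, -⟩ := hα w hw
  exact exists_ded_chainPaths_of_pathSlice_nonempty hα ht i ⟨a, mem_pathSlice.2 hw⟩
    fun h => absurd (hmax _ h) (by simp)

theorem stmt6 (m : ℕ) (hm : 1 ≤ m) (n t p q : ℕ → ℕ)
    (hn : ∀ i < m, 1 ≤ n i)
    -- each input node is attached at a terminal node of its path
    (ht : ∀ i < m, t i = 0 ∨ t i = n i - 1)
    -- bridge endpoints are genuine nodes of the respective components
    (hp : ∀ i, i + 1 < m → p i < n i)
    (hq : ∀ i, i + 1 < m → q i < n (i + 1)) :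
    -- G is strongly sign controllable: every nonempty α ⊆ V_S \ N(V_I)
    -- admits a dedicated node
    ∀ α ⊆ ((((Finset.range m).biUnion
            (fun i => (Finset.range (n i)).image (fun a => (i, a)))).image
              Sum.inl : Finset ((ℕ × ℕ) ⊕ ℕ)) \
          ((Finset.range m).image (fun i => Sum.inl (i, t i)))),
      α.Nonempty → ∃ v, ded (chainPaths m n t p q) α v :=
  stmt6_general m n t p q ht
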